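/- Let P be a nonempty countable family of probability distributions on ℕ, each with all components positive. Then BS(P) = ⋂_{p ∈ P} BS(p) is dense in S with respect to the topology on S induced by the ℓ¹-norm. -/

import Mathlib

/-- The set of probability distributions on `ℕ`, as a subset of the Banach space `ℓ¹`. -/
def S : Set (lp (fun _ : ℕ => ℝ) 1) :=
  {q | (∀ i, 0 ≤ q i) ∧ HasSum (fun i => q i) 1}

/-- The Bayes blind spot of `p`, as a subset of `S` (with its ℓ¹-subspace topology). -/
def BS (p : ℕ → ℝ) : Set S := {q | Function.Injective fun i => q.1 i / p i}

/-!
`S` is closed in `ℓ¹`, hence a Baire space, and `BS(P)` is the countable intersection of the open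
sets `{q | q i / p i ≠ q j / p j}` over `p ∈ P` and `i ≠ j`. Each of them is dense: its complement
is the zero set of a continuous linear functional that does not vanish at the Dirac mass `δ i ∈ S`,
so moving any `q ∈ S` slightly along the segment towards `δ i` leaves that zero set.
-/

open Filter Topology

theorem Convex.subset_closure_inter_setOf_ne_zero {E F : Type*} [AddCommGroup E] [Module ℝ E]
    [TopologicalSpace E] [IsTopologicalAddGroup E] [ContinuousSMul ℝ E]
    [AddCommGroup F] [Module ℝ F] {s : Set E} (hs : Convex ℝ s) (f : E →ₗ[ℝ] F)
    {x : E} (hx : x ∈ s) (hfx : f x ≠ 0) : s ⊆ closure (s ∩ {y | f y ≠ 0}) := by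
  intro y hy
  by_cases hfy : f y ≠ 0
  · exact subset_closure ⟨hy, hfy⟩
  rw [not_not] at hfy
  have hlim : Tendsto (AffineMap.lineMap y x) (𝓝[>] (0 : ℝ)) (𝓝 y) := by
    simpa using ((AffineMap.lineMap_continuous (R := ℝ) (p := y) (q := x)).tendsto 0).mono_left
      nhdsWithin_le_nhds
  refine mem_closure_of_tendsto hlim ?_
  filter_upwards [Ioo_mem_nhdsGT (zero_lt_one' ℝ)] with t ht
  refine ⟨hs.lineMap_mem hy hx ⟨ht.1.le, ht.2.le⟩, ?_⟩
  have hft : f (AffineMap.lineMap y x t) = t • f x := by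
    simp [AffineMap.lineMap_apply_module', hfy]
  simpa [hft] using ⟨ht.1.ne', hfx⟩

local notation "ℓ¹" => lp (fun _ : ℕ => ℝ) 1

theorem hasSum_iff_norm_eq_of_nonneg {α : Type*} {q : lp (fun _ : α => ℝ) 1}
    (hq : ∀ i, 0 ≤ q i) {a : ℝ} :
    HasSum (fun i => q i) a ↔ ‖q‖ = a := by
  have hnorm : HasSum (fun i => q i) ‖q‖ := by
    simpa [abs_of_nonneg (hq _)] using lp.hasSum_norm (p := 1) (by norm_num) q
  exact ⟨fun h => hnorm.unique h, fun h => h ▸ hnorm⟩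

theorem isClosed_S : IsClosed S := by
  have hS : S = (⋂ i, {q : ℓ¹ | 0 ≤ q i}) ∩ {q | ‖q‖ = 1} := by
    ext q
    simp only [S, Set.mem_ofPred_eq, Set.mem_inter_iff, Set.mem_iInter]
    exact and_congr_right fun hq => hasSum_iff_norm_eq_of_nonneg hq
  rw [hS]
  refine (isClosed_iInter fun i => isClosed_le continuous_const ?_).inter
    (isClosed_eq continuous_norm continuous_const)
  exact (lp.evalCLM ℝ (fun _ : ℕ => ℝ) 1 i).continuous

instance : CompleteSpace S := isClosed_S.completeSpace_coe

theorem convex_S : Convex ℝ S := by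
  rintro q ⟨hq, hq1⟩ r ⟨hr, hr1⟩ a b ha hb hab
  refine ⟨fun i => add_nonneg (mul_nonneg ha (hq i)) (mul_nonneg hb (hr i)), ?_⟩
  have h := (hq1.mul_left a).add (hr1.mul_left b)
  rwa [mul_one, mul_one, hab] at h

theorem single_mem_S (i : ℕ) : lp.single 1 i 1 ∈ S :=
  ⟨fun j => by simp [Pi.single_apply]; split_ifs <;> norm_num, hasSum_pi_single i 1⟩

theorem setOf_div_ne_div_mem_residual {p : ℕ → ℝ} (hp : ∀ i, p i ≠ 0) {i j : ℕ} (hij : i ≠ j) :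
    {q : S | q.1 i / p i ≠ q.1 j / p j} ∈ residual S := by
  let f : ℓ¹ →L[ℝ] ℝ :=
    (p i)⁻¹ • lp.evalCLM ℝ (fun _ : ℕ => ℝ) 1 i - (p j)⁻¹ • lp.evalCLM ℝ (fun _ : ℕ => ℝ) 1 j
  have hf : ∀ q : ℓ¹, f q = q i / p i - q j / p j := fun q => by
    rw [div_eq_inv_mul, div_eq_inv_mul]
    rfl
  have hU : {q : S | q.1 i / p i ≠ q.1 j / p j} = Subtype.val ⁻¹' {q | f q ≠ 0} := by
    ext q
    simp [hf, sub_eq_zero]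
  rw [hU]
  refine residual_of_dense_open (isOpen_ne_fun f.continuous continuous_const |>.preimage
    continuous_subtype_val) (Subtype.dense_iff.2 ?_)
  rw [Subtype.image_preimage_coe]
  refine convex_S.subset_closure_inter_setOf_ne_zero f.toLinearMap (single_mem_S i) ?_
  simp [hf, hij.symm, hp i]

theorem BS_mem_residual {p : ℕ → ℝ} (hp : ∀ i, p i ≠ 0) : BS p ∈ residual S := by
  have h : ∀ᶠ q : S in residual S, ∀ i j, i ≠ j → q.1 i / p i ≠ q.1 j / p j :=
    eventually_countable_forall.2 fun i => eventually_countable_forall.2 fun j =>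
      eventually_imp_distrib_left.2 fun hij => setOf_div_ne_div_mem_residual hp hij
  filter_upwards [h] with q hq i j hqij
  by_contra hij
  exact hq i j hij hqij

theorem bayes_blind_spot_inter_stmt12_general (P : Set (ℕ → ℝ))
    (hPcount : P.Countable)
    (hPpos : ∀ p ∈ P, ∀ i, 0 < p i) :
    Dense (⋂ p ∈ P, BS p) :=
  dense_of_mem_residual <| (countable_bInter_mem hPcount).2 fun p hp =>
    BS_mem_residual fun i => (hPpos p hp i).ne'

/-- For a nonempty countable family `P` of probability distributions
on `ℕ`, each with all components positive, `BS(P) = ⋂_{p ∈ P} BS(p)` is dense in `S`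
for the ℓ¹-subspace topology. -/
theorem bayes_blind_spot_inter_stmt12 (P : Set (ℕ → ℝ))
    (hPne : P.Nonempty) (hPcount : P.Countable)
    (hPpos : ∀ p ∈ P, ∀ i, 0 < p i) (hPsum : ∀ p ∈ P, HasSum p 1) :
    Dense (⋂ p ∈ P, BS p) :=
  bayes_blind_spot_inter_stmt12_general P hPcount hPpos
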